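/- arXiv:2010.15770 — 6 statements merged into one kernel-verified Lean document; each statement's English description precedes it below -/
import Mathlib

section
/- Let V be a finite set of n ≥ 2 vertices and let u : V × V → ℝ be a symmetric nonnegative capacity function with u(i,i) = 0 for all i. For a subset S ⊆ V let cut(S) = ∑_{i ∈ S, j ∉ S} u(i,j), and let U = (1/2)·∑_{i,j ∈ V} u(i,j) be the total capacity of all edges. If S* is a nontrivial subset (S* ≠ ∅ and S* ≠ V) with cut(S*) ≤ cut(S) for every nontrivial subset S, and λ* = cut(S*), then n·λ* ≤ 2·U. In particular, if U > 0, then (U − λ*)/U ≥ 1 − 2/n, i.e., an edge chosen at random with probability proportional to its capacity lies outside the cut δ(S*) with probability at least 1 − 2/n. -/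
open Finset

/-- Karger's lemma: for a weighted graph on `n ≥ 2` vertices with symmetric
nonnegative capacities and zero diagonal, a fixed minimum cut `S*` of capacity
`λ* = cut(S*)` satisfies `n·λ* ≤ 2·U` where `U` is the total capacity; hence if
`U > 0` then `(U − λ*)/U ≥ 1 − 2/n`. -/
theorem karger_min_cut_survival_prob
    {V : Type*} [Fintype V] [DecidableEq V]
    (n : ℕ) (hn : n = Fintype.card V) (hn2 : 2 ≤ n)
    (u : V → V → ℝ)
    (hsymm : ∀ i j, u i j = u j i)
    (hnonneg : ∀ i j, 0 ≤ u i j)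
    (hdiag : ∀ i, u i i = 0)
    (cut : Finset V → ℝ)
    (hcut : ∀ S : Finset V, cut S = ∑ i ∈ S, ∑ j ∈ Sᶜ, u i j)
    (U : ℝ) (hU : U = (1/2) * ∑ i : V, ∑ j : V, u i j)
    (Sstar : Finset V)
    (hSne : Sstar.Nonempty) (hSnuniv : Sstar ≠ Finset.univ)
    (hmin : ∀ S : Finset V, S.Nonempty → S ≠ Finset.univ → cut Sstar ≤ cut S)
    (lamstar : ℝ) (hlam : lamstar = cut Sstar) :
    (n : ℝ) * lamstar ≤ 2 * U ∧
      (0 < U → (U - lamstar) / U ≥ 1 - 2 / (n : ℝ)) := by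
  have hVcard : 2 ≤ Fintype.card V := hn ▸ hn2
  have hmain : (n : ℝ) * lamstar ≤ 2 * U := by
    have hdeg : ∀ v : V, lamstar ≤ ∑ j : V, u v j := by
      intro v
      have hne : ({v} : Finset V) ≠ Finset.univ := by
        intro h
        have := Finset.card_univ (α := V) ▸ congrArg Finset.card h
        simp at this
        omega
      have h1 : cut Sstar ≤ cut {v} := hmin {v} (Finset.singleton_nonempty v) hne
      have h2 : cut {v} = ∑ j : V, u v j := by
        rw [hcut]
        rw [Finset.sum_singleton]
        rw [← Finset.sum_compl_add_sum ({v} : Finset V) (fun j => u v j)]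
        simp [hdiag]
      rw [hlam]
      rw [h2] at h1
      exact h1
    have hsum : ∑ _v : V, lamstar ≤ ∑ v : V, ∑ j : V, u v j :=
      Finset.sum_le_sum (fun v _ => hdeg v)
    have : (Fintype.card V : ℝ) * lamstar ≤ ∑ v : V, ∑ j : V, u v j := by
      simpa [Finset.sum_const, nsmul_eq_mul] using hsum
    rw [hn]
    rw [hU]
    linarith
  refine ⟨hmain, fun hUpos => ?_⟩
  have hnpos : (0 : ℝ) < n := by positivity
  rw [ge_iff_le, sub_div, div_self hUpos.ne']
  have : lamstar / U ≤ 2 / (n : ℝ) := by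
    rw [div_le_div_iff₀ hUpos hnpos]
    linarith [hmain]
  linarith
end

section
/- Let p_n = 1 − 2/n for integers n ≥ 3, and suppose Q : ℕ → ℝ satisfies Q(2) = 1 and, for every n ≥ 3, the implicit equation Q(n) = p_n²·Q(n−1) + (1 − p_n)·(1 − (1 − Q(n))·(1 − p_n·Q(n−1))). Then for every n ≥ 2, Q(n) = 1/(2·H_n − 2), where H_n = ∑_{k=1}^n 1/k is the n-th harmonic number. -/
open Finset

/-! With `q = 1 - p`, the recurrence expands to `p * (x * (1 + q * r) - r) = 0`, i.e. to the
explicit relation `1 / x = 1 / r + q`. Hence `1 / Q n` grows by `2 / n` at each step, and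
`1 / Q n = 1 + ∑_{k=3}^n 2 / k = 2 H_n - 2`. -/

lemma mul_one_add_eq_of_fpz_rec {p x r : ℝ} (hp : p ≠ 0)
    (h : x = p ^ 2 * r + (1 - p) * (1 - (1 - x) * (1 - p * r))) :
    x * (1 + (1 - p) * r) = r := by
  have hfactor : p * (x * (1 + (1 - p) * r) - r) = 0 := by linear_combination h
  linarith [(mul_eq_zero.mp hfactor).resolve_left hp]

lemma eq_one_div_add_of_mul_one_add_eq {x D q : ℝ} (hD : 0 < D) (hq : 0 ≤ q)
    (h : x * (1 + q * (1 / D)) = 1 / D) : x = 1 / (D + q) := by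
  rw [eq_div_iff (by positivity)]
  field_simp at h
  linarith

lemma sum_Icc_one_div_succ (n : ℕ) :
    ∑ k ∈ Icc 1 (n + 1), (1 : ℝ) / k = ∑ k ∈ Icc 1 n, (1 : ℝ) / k + 1 / (n + 1) := by
  rw [sum_Icc_succ_top (by omega)]
  push_cast
  rfl

lemma two_mul_sum_Icc_one_div_sub_two_pos {n : ℕ} (hn : 2 ≤ n) :
    0 < 2 * ∑ k ∈ Icc 1 n, (1 : ℝ) / k - 2 := by
  induction n, hn using Nat.le_induction with
  | base => norm_num [sum_Icc_succ_top]
  | succ n _ ih =>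
    rw [sum_Icc_one_div_succ]
    have : (0 : ℝ) < 1 / (n + 1) := by positivity
    linarith

/-- If `Q(2) = 1` and `Q` satisfies the FPZ implicit success-probability
recurrence with `p_n = 1 − 2/n`, then `Q(n) = 1/(2H_n − 2)` for all `n ≥ 2`. -/
theorem fpz_success_probability
    (Q : ℕ → ℝ) (hQ2 : Q 2 = 1)
    (hrec : ∀ n : ℕ, 3 ≤ n →
      Q n = (1 - 2 / (n : ℝ)) ^ 2 * Q (n - 1) +
        (1 - (1 - 2 / (n : ℝ))) *
          (1 - (1 - Q n) * (1 - (1 - 2 / (n : ℝ)) * Q (n - 1)))) :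
    ∀ n : ℕ, 2 ≤ n →
      Q n = 1 / (2 * (∑ k ∈ Finset.Icc 1 n, (1 : ℝ) / k) - 2) := by
  intro n hn
  induction n, hn using Nat.le_induction with
  | base => norm_num [hQ2, sum_Icc_succ_top]
  | succ n hn ih =>
    have hn' : (3 : ℝ) ≤ (n + 1 : ℕ) := by exact_mod_cast Nat.succ_le_succ hn
    have hp : 1 - 2 / ((n + 1 : ℕ) : ℝ) ≠ 0 := by
      have : 2 / ((n + 1 : ℕ) : ℝ) < 1 := (div_lt_one (by linarith)).mpr (by linarith)
      exact ne_of_gt (by linarith)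
    have hstep := mul_one_add_eq_of_fpz_rec hp (hrec (n + 1) (by omega))
    rw [Nat.add_sub_cancel, ih] at hstep
    rw [eq_one_div_add_of_mul_one_add_eq (two_mul_sum_Icc_one_div_sub_two_pos hn)
      (by rw [sub_sub_cancel]; positivity) hstep, sum_Icc_one_div_succ]
    push_cast
    ring
end

section
/- Let f be a real number with 0 ≤ f ≤ 1, and let a : ℕ → ℝ be nonnegative with a(0) = 0, ∑_{k=1}^∞ a(k) = 1, and m = ∑_{k=1}^∞ k·a(k) finite (the series ∑ k·a(k) is summable). Let k₀ = ⌊m⌋ and λ = k₀ + 1 − m (so 0 ≤ λ ≤ 1 and m = λ·k₀ + (1−λ)·(k₀+1)). Then ∑_{k=1}^∞ a(k)·f^k ≥ λ·f^{k₀} + (1−λ)·f^{k₀+1}. -/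
/-- Lower-envelope/convexity argument: if `a` is a probability distribution on
the positive integers with mean `m`, `k₀ = ⌊m⌋` and `l = k₀ + 1 − m`, then for
`0 ≤ f ≤ 1` we have `∑_{k≥1} a(k)·f^k ≥ l·f^{k₀} + (1−l)·f^{k₀+1}`. -/
theorem failure_prob_lower_envelope (f : ℝ) (hf0 : 0 ≤ f) (hf1 : f ≤ 1)
    (a : ℕ → ℝ) (ha : ∀ k, 0 ≤ a k) (ha0 : a 0 = 0)
    (hsum : ∑' k : ℕ, a k = 1) (hsummable : Summable a)
    (hmsummable : Summable (fun k : ℕ => (k : ℝ) * a k))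
    (m : ℝ) (hm : m = ∑' k : ℕ, (k : ℝ) * a k)
    (k₀ : ℕ) (hk₀ : k₀ = ⌊m⌋₊)
    (l : ℝ) (hl : l = (k₀ : ℝ) + 1 - m) :
    ∑' k : ℕ, a k * f ^ k ≥ l * f ^ k₀ + (1 - l) * f ^ (k₀ + 1) := by
  set s : ℝ := f ^ (k₀ + 1) - f ^ k₀ with hs
  have hs' : s = f ^ k₀ * (f - 1) := by rw [hs, pow_succ]; ring
  -- upward part of the convexity chord bound
  have up : ∀ d : ℕ, f ^ k₀ + (d : ℝ) * s ≤ f ^ (k₀ + d) := by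
    intro d
    induction d with
    | zero => simp
    | succ d ih =>
      have h1 : f ^ k₀ * (f - 1) ≤ f ^ (k₀ + d) * (f - 1) :=
        mul_le_mul_of_nonpos_right
          (pow_le_pow_of_le_one hf0 hf1 (Nat.le_add_right _ _)) (by linarith)
      have h2 : f ^ (k₀ + (d + 1)) = f ^ (k₀ + d) + f ^ (k₀ + d) * (f - 1) := by
        rw [← Nat.add_assoc, pow_succ]; ring
      rw [h2]
      push_cast
      rw [hs'] at *
      linarith
  -- downward part
  have down : ∀ d : ℕ, d ≤ k₀ → f ^ k₀ - (d : ℝ) * s ≤ f ^ (k₀ - d) := by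
    intro d
    induction d with
    | zero => simp
    | succ d ih =>
      intro hd
      have hd' : d ≤ k₀ := Nat.le_of_succ_le hd
      have hlt : d < k₀ := hd
      have h1 : f ^ k₀ * (1 - f) ≤ f ^ (k₀ - (d + 1)) * (1 - f) :=
        mul_le_mul_of_nonneg_right
          (pow_le_pow_of_le_one hf0 hf1 (Nat.sub_le _ _)) (by linarith)
      have h2 : f ^ (k₀ - d) = f * f ^ (k₀ - (d + 1)) := by
        rw [← pow_succ']
        congr 1
        omega
      have h3 : f ^ (k₀ - (d + 1)) - f ^ (k₀ - d) = f ^ (k₀ - (d + 1)) * (1 - f) := by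
        rw [h2]; ring
      have ih' := ih hd'
      push_cast
      rw [hs'] at *
      linarith
  -- the chord bound for every natural number
  have key : ∀ n : ℕ, f ^ k₀ + ((n : ℝ) - (k₀ : ℝ)) * s ≤ f ^ n := by
    intro n
    rcases le_or_gt k₀ n with h | h
    · obtain ⟨d, rfl⟩ := Nat.exists_eq_add_of_le h
      have := up d
      push_cast
      linarith [up d]
    · have hd : k₀ - n ≤ k₀ := Nat.sub_le _ _
      have := down (k₀ - n) hd
      rw [Nat.sub_sub_self (le_of_lt h)] at this
      have hc : ((k₀ - n : ℕ) : ℝ) = (k₀ : ℝ) - (n : ℝ) := by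
        rw [Nat.cast_sub (le_of_lt h)]
      rw [hc] at this
      linarith
  -- summability of the lower bound series
  have hg : (fun k : ℕ => a k * (f ^ k₀ + ((k : ℝ) - (k₀ : ℝ)) * s)) =
      fun k : ℕ => (f ^ k₀ - (k₀ : ℝ) * s) * a k + s * ((k : ℝ) * a k) := by
    funext k; ring
  have hgsum : Summable (fun k : ℕ => a k * (f ^ k₀ + ((k : ℝ) - (k₀ : ℝ)) * s)) := by
    rw [hg]
    exact (hsummable.mul_left _).add (hmsummable.mul_left _)
  have hfsum : Summable (fun k : ℕ => a k * f ^ k) := by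
    apply Summable.of_nonneg_of_le (fun k => mul_nonneg (ha k) (pow_nonneg hf0 k))
      (fun k => ?_) hsummable
    exact mul_le_of_le_one_right (ha k) (pow_le_one₀ hf0 hf1)
  -- compare the sums
  have hle : ∑' k : ℕ, a k * (f ^ k₀ + ((k : ℝ) - (k₀ : ℝ)) * s) ≤
      ∑' k : ℕ, a k * f ^ k := by
    apply Summable.tsum_le_tsum (fun k => ?_) hgsum hfsum
    exact mul_le_mul_of_nonneg_left (key k) (ha k)
  -- compute the lower sum
  have hval : ∑' k : ℕ, a k * (f ^ k₀ + ((k : ℝ) - (k₀ : ℝ)) * s) =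
      (f ^ k₀ - (k₀ : ℝ) * s) + s * m := by
    rw [hg, Summable.tsum_add (hsummable.mul_left _) (hmsummable.mul_left _),
      tsum_mul_left, tsum_mul_left, hsum, hm]
    ring
  have hrhs : l * f ^ k₀ + (1 - l) * f ^ (k₀ + 1) = f ^ k₀ + (1 - l) * s := by
    rw [hs]; ring
  rw [ge_iff_le, hrhs]
  have h1l : 1 - l = m - (k₀ : ℝ) := by rw [hl]; ring
  rw [h1l]
  rw [hval] at hle
  linarith
end

section
/- Let Q : ℕ → ℝ satisfy Q(2) = 1 and, for all integers n ≥ 3, Q(n) = Q(n−1) − (2·(n−2)/n²)·Q(n−1)². Then for all n ≥ 3, Q(n) ≥ Q(n−1)/2. -/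
/-- Under the optimized recurrence `Q(n) = Q(n−1) − (2(n−2)/n²)·Q(n−1)²` with
`Q(2) = 1`, we have `Q(n) ≥ Q(n−1)/2` for all `n ≥ 3`. -/
theorem optimized_Q_halving (Q : ℕ → ℝ) (hQ2 : Q 2 = 1)
    (hrec : ∀ n : ℕ, 3 ≤ n →
      Q n = Q (n - 1) - (2 * ((n : ℝ) - 2) / (n : ℝ) ^ 2) * Q (n - 1) ^ 2) :
    ∀ n : ℕ, 3 ≤ n → Q n ≥ Q (n - 1) / 2 := by
  have key : ∀ m : ℕ, 2 ≤ m → 0 ≤ Q m ∧ Q m ≤ 1 := by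
    intro m hm
    induction m, hm using Nat.le_induction with
    | base => simp [hQ2]
    | succ n hn ih =>
      have h3 : 3 ≤ n + 1 := by omega
      have heq := hrec (n + 1) h3
      simp only [Nat.add_sub_cancel] at heq
      have hn3 : (3 : ℝ) ≤ (n + 1 : ℕ) := by exact_mod_cast h3
      set x : ℝ := ((n + 1 : ℕ) : ℝ) with hx
      have hx2 : (0:ℝ) < x ^ 2 := by positivity
      have hc0 : 0 ≤ 2 * (x - 2) / x ^ 2 := by
        apply div_nonneg _ (le_of_lt hx2); linarith
      have hc1 : 2 * (x - 2) / x ^ 2 ≤ 1 / 2 := by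
        rw [div_le_div_iff₀ hx2 (by norm_num)]
        nlinarith
      obtain ⟨h0, h1⟩ := ih
      constructor
      · rw [heq]
        nlinarith [sq_nonneg (Q n)]
      · rw [heq]
        nlinarith [sq_nonneg (Q n), mul_nonneg hc0 (sq_nonneg (Q n))]
  intro n hn
  have heq := hrec n hn
  have hprev := key (n - 1) (by omega)
  have hn3 : (3 : ℝ) ≤ (n : ℝ) := by exact_mod_cast hn
  set x : ℝ := (n : ℝ)
  have hx2 : (0:ℝ) < x ^ 2 := by positivity
  have hc1 : 2 * (x - 2) / x ^ 2 ≤ 1 / 2 := by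
    rw [div_le_div_iff₀ hx2 (by norm_num)]; nlinarith
  have hc0 : 0 ≤ 2 * (x - 2) / x ^ 2 := by
    apply div_nonneg _ (le_of_lt hx2); linarith
  obtain ⟨h0, h1⟩ := hprev
  rw [heq]
  nlinarith [sq_nonneg (Q (n - 1)), mul_le_mul hc1 h1 h0 (by norm_num : (0:ℝ) ≤ 1/2)]
end

section
/- Let Q : ℕ → ℝ satisfy Q(2) = 1 and, for all integers n ≥ 3, Q(n) = Q(n−1) − (2·(n−2)/n²)·Q(n−1)². Then for all n ≥ 2, Q(n) ≥ 1/(4·H_n), where H_n = ∑_{k=1}^n 1/k is the n-th harmonic number. -/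
open Finset

private lemma H_ge_one' (n : ℕ) (hn : 1 ≤ n) :
    (1 : ℝ) ≤ ∑ k ∈ Finset.Icc 1 n, (1 : ℝ) / k := by
  have h1 : (1 : ℕ) ∈ Finset.Icc 1 n := by simp [hn]
  have := Finset.single_le_sum (f := fun k : ℕ => (1 : ℝ) / k)
    (fun i _ => by positivity) h1
  simpa using this

set_option maxHeartbeats 1000000 in
/-- Under the optimized recurrence `Q(n) = Q(n−1) − (2(n−2)/n²)·Q(n−1)²` with
`Q(2) = 1`, we have `Q(n) ≥ 1/(4·H_n)` for all `n ≥ 2`. -/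
theorem optimized_Q_lower_bound (Q : ℕ → ℝ) (hQ2 : Q 2 = 1)
    (hrec : ∀ n : ℕ, 3 ≤ n →
      Q n = Q (n - 1) - (2 * ((n : ℝ) - 2) / (n : ℝ) ^ 2) * Q (n - 1) ^ 2) :
    ∀ n : ℕ, 2 ≤ n →
      Q n ≥ 1 / (4 * ∑ k ∈ Finset.Icc 1 n, (1 : ℝ) / k) := by
  suffices h : ∀ n : ℕ, 2 ≤ n →
      1 / (4 * ∑ k ∈ Finset.Icc 1 n, (1 : ℝ) / k) ≤ Q n ∧ Q n ≤ 1 by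
    intro n hn; exact (h n hn).1
  intro n hn
  induction n, hn using Nat.le_induction with
  | base =>
    have h2 : Finset.Icc 1 2 = {1, 2} := by decide
    rw [h2]
    norm_num [hQ2]
  | succ n hn ih =>
    obtain ⟨ihl, ihr⟩ := ih
    have hrec' := hrec (n + 1) (by omega)
    simp only [Nat.add_sub_cancel] at hrec'
    push_cast at hrec'
    have hHstep : ∑ k ∈ Finset.Icc 1 (n + 1), (1 : ℝ) / k
        = (∑ k ∈ Finset.Icc 1 n, (1 : ℝ) / k) + 1 / ((n : ℝ) + 1) := by
      rw [Finset.sum_Icc_succ_top (by omega)]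
      push_cast; ring
    set H : ℝ := ∑ k ∈ Finset.Icc 1 n, (1 : ℝ) / k with hHdef
    have hH1 : (1 : ℝ) ≤ H := H_ge_one' n (by omega)
    have hx : (2 : ℝ) ≤ (n : ℝ) := by exact_mod_cast hn
    set x : ℝ := (n : ℝ) with hxdef
    -- hrec' : Q (n+1) = Q n - (2*(x+1-2)/(x+1)^2) * Q n ^ 2
    set c : ℝ := 2 * ((x : ℝ) + 1 - 2) / (x + 1) ^ 2 with hcdef
    have hxp : (0 : ℝ) < x + 1 := by linarith
    have hceq : c * (x + 1) ^ 2 = 2 * (x + 1 - 2) := by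
      rw [hcdef]; field_simp
    have hc0 : 0 ≤ c := by
      rw [hcdef]
      apply div_nonneg (by linarith) (by positivity)
    have hc1 : c ≤ 1 := by nlinarith [sq_nonneg (x - 1)]
    have hHpos : (0 : ℝ) < H := by linarith
    clear_value x
    set b : ℝ := 1 / (4 * H) with hbdef
    have hb0 : 0 < b := by rw [hbdef]; positivity
    have hble : b ≤ Q n := ihl
    have hb1 : b ≤ 1 := le_trans hble ihr
    clear_value H b c
    -- monotonicity: Q n - c Q n ^ 2 ≥ b - c b ^ 2
    have hmono : b - c * b ^ 2 ≤ Q n - c * Q n ^ 2 := by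
      have key : 0 ≤ (Q n - b) * (1 - c * (Q n + b)) := by
        apply mul_nonneg (by linarith)
        have : c * (Q n + b) ≤ 1 * 2 := by
          apply mul_le_mul hc1 (by linarith) (by linarith) (by norm_num)
        have h2c : 2 * c ≤ 1 := by nlinarith [sq_nonneg (x - 1)]
        nlinarith
      nlinarith
    -- target bound: b - c b^2 ≥ 1/(4*(H + 1/(x+1)))
    have htarget : 1 / (4 * (H + 1 / (x + 1))) ≤ b - c * b ^ 2 := by
      have hden : (0 : ℝ) < 4 * (H + 1 / (x + 1)) := by positivity
      have hcx : c * (x + 1) ≤ 2 := by nlinarith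
      have heq1 : b - c * b ^ 2 = (4 * H - c) / (16 * H ^ 2) := by
        rw [hbdef]; field_simp; ring
      have hp1 : (0:ℝ) < 16 * H ^ 2 := by positivity
      have hp2 : (0:ℝ) < 4 * (H * (x + 1) + 1) := by nlinarith [mul_pos hHpos hxp]
      have heq2 : 1 / (4 * (H + 1 / (x + 1))) = (x + 1) / (4 * (H * (x + 1) + 1)) := by
        rw [div_eq_div_iff (ne_of_gt hden) (ne_of_gt hp2)]
        field_simp
      rw [heq1, heq2, div_le_div_iff₀ hp2 hp1]
      have hdiff : (4 * H - c) * (4 * (H * (x + 1) + 1)) - (x + 1) * (16 * H ^ 2)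
          = 16 * H - 4 * (H * (c * (x + 1))) - 4 * c := by ring
      have hkey := mul_le_mul_of_nonneg_left hcx hHpos.le
      linarith
    constructor
    · rw [hHstep, hrec']
      calc 1 / (4 * (H + 1 / (x + 1))) ≤ b - c * b ^ 2 := htarget
        _ ≤ Q n - c * Q n ^ 2 := hmono
    · rw [hrec']
      nlinarith [sq_nonneg (Q n)]
end

section
/- Let c > 0 and let T : ℕ → ℝ be nonnegative with T(2) ≤ c and, for all integers n ≥ 5, T(n) ≤ ((n−4)/(n−2))·T(n−1) + (2/(n−2))·2·T(n−1) + c·n, and T(n) ≤ (n/(n−2))·T(n−1) + c·n for 3 ≤ n ≤ 4. Then there is an absolute constant C > 0 such that for all n ≥ 2, T(n) ≤ C·c·n²·H_n, where H_n = ∑_{k=1}^n 1/k is the n-th harmonic number. -/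
open Finset

private lemma harm_succ (m : ℕ) :
    (∑ k ∈ Finset.Icc 1 (m + 2), (1 : ℝ) / k)
      = (∑ k ∈ Finset.Icc 1 (m + 1), (1 : ℝ) / k) + 1 / ((m : ℝ) + 2) := by
  rw [Finset.sum_Icc_succ_top (by omega : 1 ≤ m + 2)]
  push_cast
  ring

/-- Expected running time of the optimized recursive contraction algorithm:
there is an absolute constant `C > 0` such that any nonnegative `T` with
`T(2) ≤ c`, `T(n) ≤ (n/(n−2))·T(n−1) + c·n` for `3 ≤ n ≤ 4`, and
`T(n) ≤ ((n−4)/(n−2))·T(n−1) + (2/(n−2))·2·T(n−1) + c·n` for `n ≥ 5`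
satisfies `T(n) ≤ C·c·n²·H_n` for all `n ≥ 2`. -/
theorem optimized_running_time :
    ∃ C : ℝ, 0 < C ∧
      ∀ (c : ℝ), 0 < c → ∀ T : ℕ → ℝ, (∀ n, 0 ≤ T n) → T 2 ≤ c →
        (∀ n : ℕ, 3 ≤ n → n ≤ 4 →
          T n ≤ ((n : ℝ) / ((n : ℝ) - 2)) * T (n - 1) + c * n) →
        (∀ n : ℕ, 5 ≤ n →
          T n ≤ (((n : ℝ) - 4) / ((n : ℝ) - 2)) * T (n - 1) +
            (2 / ((n : ℝ) - 2)) * (2 * T (n - 1)) + c * n) →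
        ∀ n : ℕ, 2 ≤ n →
          T n ≤ C * c * (n : ℝ) ^ 2 * (∑ k ∈ Finset.Icc 1 n, (1 : ℝ) / k) := by
  refine ⟨1, one_pos, ?_⟩
  intro c hc T hT h2 h34 h5
  -- unified recurrence for n ≥ 3
  have hrec : ∀ n : ℕ, 3 ≤ n → T n ≤ ((n : ℝ) / ((n : ℝ) - 2)) * T (n - 1) + c * n := by
    intro n hn
    rcases le_or_gt n 4 with h | h
    · exact h34 n hn h
    · have h5n := h5 n h
      have hn5 : (5 : ℝ) ≤ (n : ℝ) := by exact_mod_cast h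
      have hn2 : ((n : ℝ) - 2) ≠ 0 := by nlinarith
      calc T n ≤ _ := h5n
        _ = ((n : ℝ) / ((n : ℝ) - 2)) * T (n - 1) + c * n := by
            field_simp
            ring
  have key : ∀ m : ℕ,
      T (m + 2) ≤ c * ((m : ℝ) + 2) * ((m : ℝ) + 1) * ∑ k ∈ Finset.Icc 1 (m + 1), (1 : ℝ) / k := by
    intro m
    induction m with
    | zero =>
        simp only [Nat.cast_zero]
        have hs' : (∑ k ∈ Finset.Icc 1 (0 + 1), (1 : ℝ) / (k : ℕ)) = 1 := by simp
        rw [hs']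
        nlinarith [h2]
    | succ m ih =>
        have hr := hrec (m + 3) (by omega)
        have hsub : m + 3 - 1 = m + 2 := rfl
        rw [hsub] at hr
        push_cast at hr
        have h32 : (m : ℝ) + 3 - 2 = (m : ℝ) + 1 := by ring
        rw [h32] at hr
        set S := ∑ k ∈ Finset.Icc 1 (m + 1), (1 : ℝ) / k with hSdef
        have hm1 : (0 : ℝ) < (m : ℝ) + 1 := by positivity
        have h1 : ((m : ℝ) + 3) / ((m : ℝ) + 1) * T (m + 2)
            ≤ ((m : ℝ) + 3) / ((m : ℝ) + 1) * (c * ((m : ℝ) + 2) * ((m : ℝ) + 1) * S) :=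
          mul_le_mul_of_nonneg_left ih (by positivity)
        have heq : ((m : ℝ) + 3) / ((m : ℝ) + 1) * (c * ((m : ℝ) + 2) * ((m : ℝ) + 1) * S)
            + c * ((m : ℝ) + 3)
            = c * ((m : ℝ) + 3) * ((m : ℝ) + 2) * (S + 1 / ((m : ℝ) + 2)) := by
          field_simp
        have hgoal : T (m + 3) ≤ c * ((m : ℝ) + 3) * ((m : ℝ) + 2) * (S + 1 / ((m : ℝ) + 2)) := by
          linarith
        have hsum := harm_succ m
        push_cast
        show T (m + 3) ≤ c * ((m : ℝ) + 1 + 2) * ((m : ℝ) + 1 + 1)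
            * ∑ k ∈ Finset.Icc 1 (m + 2), (1 : ℝ) / k
        rw [hsum, ← hSdef]
        calc T (m + 3) ≤ c * ((m : ℝ) + 3) * ((m : ℝ) + 2) * (S + 1 / ((m : ℝ) + 2)) := hgoal
          _ = c * ((m : ℝ) + 1 + 2) * ((m : ℝ) + 1 + 1) * (S + 1 / ((m : ℝ) + 2)) := by ring
  intro n hn
  obtain ⟨m, rfl⟩ : ∃ m, n = m + 2 := ⟨n - 2, by omega⟩
  have hk := key m
  have hS0 : 0 ≤ ∑ k ∈ Finset.Icc 1 (m + 1), (1 : ℝ) / k := by positivity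
  have hsum := harm_succ m
  rw [hsum]
  push_cast
  set S := ∑ k ∈ Finset.Icc 1 (m + 1), (1 : ℝ) / k with hSdef
  have hm2 : (0 : ℝ) < (m : ℝ) + 2 := by positivity
  have hexp : 1 * c * ((m : ℝ) + 2) ^ 2 * (S + 1 / ((m : ℝ) + 2))
      = c * ((m : ℝ) + 2) * ((m : ℝ) + 2) * S + c * ((m : ℝ) + 2) := by
    field_simp
  rw [hexp]
  nlinarith [mul_pos hc hm2, mul_nonneg (mul_nonneg hc.le hm2.le) hS0]
end
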